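/- Let I be a Borel-fixed ideal generated in degree m (all minimal generators of degree m) with g minimal generators. Then dim_K I_{m+1} = Σ_{x^A ∈ G(I)} (n + 1 − max(A)), where G(I) is the set of minimal generators and max(A) is the largest variable index in x^A, and the variables are x_0,...,x_n. -/

import Mathlib

/-!
Every monomial `x^B` of degree `m + 1` in `I` factors uniquely as `x_j x^A` with `x^A` a minimal
generator and `j = max(B) ≥ max(A)`: writing `x^B = x_k x^{A₀}` for some generator `x^{A₀}`,
either `k = max(B)` already, or `x_{max(B)}` divides `x^{A₀}` and Borel-fixedness replaces it by
`x_k`, giving a monomial of degree `m` in `I`, hence a generator. So the monomials of `I_{m+1}`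
are in bijection with the pairs `(A, j)`, `A ∈ G`, `max(A) ≤ j ≤ n`, and `I_{m+1}` is spanned by
them since `I` is a monomial ideal.
-/

open MvPolynomial Finsupp

/-- `I` is a monomial ideal: generated by monomials. -/
def IsMonomialIdeal {n : ℕ} {K : Type*} [Field K]
    (I : Ideal (MvPolynomial (Fin (n + 1)) K)) : Prop :=
  ∃ S : Set (Fin (n + 1) →₀ ℕ),
    I = Ideal.span ((fun A => MvPolynomial.monomial A (1 : K)) '' S)

/-- The Borel-fixed condition. -/
def BorelFixed {n : ℕ} {K : Type*} [Field K]
    (I : Ideal (MvPolynomial (Fin (n + 1)) K)) : Prop :=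
  IsMonomialIdeal I ∧
    ∀ (A : Fin (n + 1) →₀ ℕ) (i : Fin n),
      MvPolynomial.monomial (A + Finsupp.single i.succ 1) (1 : K) ∈ I →
      MvPolynomial.monomial (A + Finsupp.single i.castSucc 1) (1 : K) ∈ I

/-- `x^A` is a minimal monomial generator of the monomial ideal `I`. -/
def MinGen {n : ℕ} {K : Type*} [Field K]
    (I : Ideal (MvPolynomial (Fin (n + 1)) K)) (A : Fin (n + 1) →₀ ℕ) : Prop :=
  MvPolynomial.monomial A (1 : K) ∈ I ∧
    ∀ i : Fin (n + 1), A i ≠ 0 →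
      MvPolynomial.monomial (A - Finsupp.single i 1) (1 : K) ∉ I

/-- The dimension over `K` of the degree-`d` graded piece of an ideal. -/
noncomputable def hilb {n : ℕ} {K : Type*} [Field K]
    (I : Ideal (MvPolynomial (Fin (n + 1)) K)) (d : ℕ) : ℕ :=
  Module.finrank K
    ↥(Submodule.restrictScalars K I ⊓
        MvPolynomial.homogeneousSubmodule (Fin (n + 1)) K d)

open scoped Finset

section MonomialIdeal

variable {σ : Type*}

theorem Finsupp.eq_of_le_of_degree_eq {A B : σ →₀ ℕ} (h : A ≤ B) (hd : A.degree = B.degree) :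
    A = B := by
  obtain ⟨C, rfl⟩ := exists_add_of_le h
  rw [map_add, left_eq_add, degree_eq_zero_iff] at hd
  rw [hd, add_zero]

theorem Fin.card_filter_le_val {k t : ℕ} : #{i : Fin k | t ≤ (i : ℕ)} = k - t := by
  have h := Finset.card_filter_add_card_filter_not (s := Finset.univ) fun i : Fin k => (i : ℕ) < t
  simp only [not_lt, Fin.card_filter_val_lt, Finset.card_univ, Fintype.card_fin] at h
  omega

variable {R : Type*} [CommSemiring R]

theorem MvPolynomial.monomial_add_mem {I : Ideal (MvPolynomial σ R)} {A : σ →₀ ℕ}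
    (hA : monomial A (1 : R) ∈ I) (C : σ →₀ ℕ) : monomial (A + C) (1 : R) ∈ I := by
  rw [← mul_one (1 : R), ← monomial_mul]
  exact I.mul_mem_right _ hA

theorem MvPolynomial.mem_span_monomial_image_iff [Nontrivial R] {S : Set (σ →₀ ℕ)}
    {p : MvPolynomial σ R} :
    p ∈ Ideal.span ((fun s => monomial s (1 : R)) '' S) ↔
      ∀ v ∈ p.support, monomial v (1 : R) ∈ Ideal.span ((fun s => monomial s (1 : R)) '' S) := by
  classical
  simp only [mem_ideal_span_monomial_image, support_monomial, one_ne_zero, if_false,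
    Finset.mem_singleton, forall_eq]

theorem MvPolynomial.finrank_inf_homogeneousSubmodule_eq_card {K : Type*} [Field K]
    {I : Ideal (MvPolynomial σ K)} {S : Set (σ →₀ ℕ)}
    (hI : I = Ideal.span ((fun s => monomial s (1 : K)) '' S)) {d : ℕ} {T : Finset (σ →₀ ℕ)}
    (hT : ∀ B, B ∈ T ↔ monomial B (1 : K) ∈ I ∧ B.degree = d) :
    Module.finrank K ↥(I.restrictScalars K ⊓ homogeneousSubmodule σ K d) = #T := by
  have hrestrict : I.restrictScalars K ⊓ homogeneousSubmodule σ K d =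
      restrictSupport K (T : Set (σ →₀ ℕ)) := by
    ext p
    rw [Submodule.mem_inf, Submodule.restrictScalars_mem, homogeneousSubmodule_eq_finsupp_supported,
      hI, mem_span_monomial_image_iff, ← hI, mem_restrictSupport_iff]
    simp only [Set.subset_def, Finset.mem_coe, hT]
    exact forall₂_and.symm
  rw [hrestrict, Module.finrank_eq_card_basis (basisRestrictSupport K _)]
  exact Fintype.card_coe T

end MonomialIdeal

section Borel

variable {n : ℕ}

def maxIndex (A : Fin (n + 1) →₀ ℕ) : ℕ :=
  A.support.sup fun j => (j : ℕ)

theorem le_maxIndex {A : Fin (n + 1) →₀ ℕ} {i : Fin (n + 1)} (hi : A i ≠ 0) :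
    (i : ℕ) ≤ maxIndex A :=
  Finset.le_sup (f := fun j : Fin (n + 1) => (j : ℕ)) (mem_support_iff.2 hi)

theorem maxIndex_mono {A B : Fin (n + 1) →₀ ℕ} (h : A ≤ B) : maxIndex A ≤ maxIndex B :=
  Finset.sup_mono (support_mono h)

theorem exists_eq_maxIndex {B : Fin (n + 1) →₀ ℕ} (hB : B ≠ 0) :
    ∃ j, B j ≠ 0 ∧ (j : ℕ) = maxIndex B := by
  obtain ⟨j, hj, hmax⟩ :=
    Finset.exists_mem_eq_sup B.support (support_nonempty_iff.2 hB) fun j => (j : ℕ)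
  exact ⟨j, mem_support_iff.1 hj, hmax.symm⟩

theorem maxIndex_add_single {A : Fin (n + 1) →₀ ℕ} {j : Fin (n + 1)} (h : maxIndex A ≤ j) :
    maxIndex (A + single j 1) = j := by
  classical
  rw [maxIndex, support_add_eq_union, Finset.sup_union, support_single _ one_ne_zero,
    Finset.sup_singleton]
  exact max_eq_right h

theorem eq_of_add_single_eq {A A' : Fin (n + 1) →₀ ℕ} {j j' : Fin (n + 1)}
    (h : maxIndex A ≤ j) (h' : maxIndex A' ≤ j')
    (heq : A + single j 1 = A' + single j' 1) : A = A' ∧ j = j' := by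
  obtain rfl : j = j' := Fin.ext <| by
    rw [← maxIndex_add_single h, ← maxIndex_add_single h', heq]
  exact ⟨add_right_cancel heq, rfl⟩

def stableDecomposition (G : Finset (Fin (n + 1) →₀ ℕ)) :
    Finset ((_ : Fin (n + 1) →₀ ℕ) × Fin (n + 1)) :=
  G.sigma fun A => {j | maxIndex A ≤ j}

theorem card_stableDecomposition (G : Finset (Fin (n + 1) →₀ ℕ)) :
    #(stableDecomposition G) = ∑ A ∈ G, (n + 1 - maxIndex A) := by
  simp only [stableDecomposition, Finset.card_sigma, Fin.card_filter_le_val]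

theorem injOn_stableDecomposition (G : Finset (Fin (n + 1) →₀ ℕ)) :
    Set.InjOn (fun p : (_ : Fin (n + 1) →₀ ℕ) × Fin (n + 1) => p.1 + single p.2 1)
      (stableDecomposition G : Set _) := by
  rintro ⟨A, j⟩ hp ⟨A', j'⟩ hp' heq
  simp only [stableDecomposition, Finset.coe_sigma, Set.mem_sigma_iff, Finset.mem_coe,
    Finset.mem_filter_univ] at hp hp'
  obtain ⟨rfl, rfl⟩ := eq_of_add_single_eq hp.2 hp'.2 heq
  rfl

variable {K : Type*} [Field K] {I : Ideal (MvPolynomial (Fin (n + 1)) K)}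

theorem exists_minGen_le {B : Fin (n + 1) →₀ ℕ} (hB : monomial B (1 : K) ∈ I) :
    ∃ A ≤ B, MinGen I A := by
  obtain ⟨A, hAB, hA, hAmin⟩ :=
    exists_minimal_le_of_wellFoundedLT (fun A => monomial A (1 : K) ∈ I) B hB
  refine ⟨A, hAB, hA, fun i hi hmem => hi ?_⟩
  have h := hAmin hmem tsub_le_self i
  simp only [coe_tsub, Pi.sub_apply, single_eq_same] at h
  omega

variable {m : ℕ}

theorem minGen_of_mem_of_degree_eq (hgen : ∀ A, MinGen I A → A.degree = m)
    {A : Fin (n + 1) →₀ ℕ} (hA : monomial A (1 : K) ∈ I) (hdeg : A.degree = m) : MinGen I A := by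
  obtain ⟨A', hle, hA'⟩ := exists_minGen_le hA
  obtain rfl := eq_of_le_of_degree_eq hle (by rw [hgen A' hA', hdeg])
  exact hA'

theorem exists_minGen_add_single (hgen : ∀ A, MinGen I A → A.degree = m)
    {B : Fin (n + 1) →₀ ℕ} (hB : monomial B (1 : K) ∈ I) (hdeg : B.degree = m + 1) :
    ∃ A, ∃ k : Fin (n + 1), MinGen I A ∧ B = A + single k 1 := by
  obtain ⟨A, hle, hA⟩ := exists_minGen_le hB
  obtain ⟨C, rfl⟩ := exists_add_of_le hle
  have hC : C ∈ {d : Fin (n + 1) →₀ ℕ | d.degree = 1} := by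
    rw [map_add, hgen A hA] at hdeg
    exact Nat.add_left_cancel hdeg
  rw [← range_single_one] at hC
  obtain ⟨k, rfl⟩ := hC
  exact ⟨A, k, hA, rfl⟩

theorem BorelFixed.monomial_add_single_mem_of_le (hI : BorelFixed I) (C : Fin (n + 1) →₀ ℕ)
    {i j : Fin (n + 1)} (hji : j ≤ i) (h : monomial (C + single i 1) (1 : K) ∈ I) :
    monomial (C + single j 1) (1 : K) ∈ I := by
  induction i using Fin.induction with
  | zero => rwa [Fin.le_zero_iff.1 hji]
  | succ k ih =>
    rcases hji.eq_or_lt with rfl | hlt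
    · exact h
    · exact ih (Fin.le_castSucc_iff.2 hlt) (hI.2 C k h)

theorem BorelFixed.exists_minGen_add_single_maxIndex_le (hI : BorelFixed I)
    (hgen : ∀ A, MinGen I A → A.degree = m)
    {B : Fin (n + 1) →₀ ℕ} (hB : monomial B (1 : K) ∈ I) (hdeg : B.degree = m + 1) :
    ∃ A, ∃ j : Fin (n + 1), MinGen I A ∧ maxIndex A ≤ j ∧ B = A + single j 1 := by
  obtain ⟨A₀, k, hA₀, rfl⟩ := exists_minGen_add_single hgen hB hdeg
  obtain ⟨j, hj, hjmax⟩ := exists_eq_maxIndex (B := A₀ + single k 1) (by simp)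
  have hkj : k ≤ j := Fin.le_iff_val_le_val.2 (hjmax ▸ le_maxIndex (by simp))
  -- `x_j` with `j = max(B)` can always be split off, by Borel-fixedness if `k ≠ j`.
  obtain ⟨A, hA, hB⟩ : ∃ A, monomial A (1 : K) ∈ I ∧ A₀ + single k 1 = A + single j 1 := by
    by_cases hk : k = j
    · exact ⟨A₀, hA₀.1, hk ▸ rfl⟩
    · have hA₀j : single j 1 ≤ A₀ := by
        simpa [single_apply, hk, Nat.one_le_iff_ne_zero] using hj
      obtain ⟨C, rfl⟩ := exists_add_of_le hA₀j
      rw [add_comm (single j 1)] at hA₀ ⊢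
      exact ⟨C + single k 1, hI.monomial_add_single_mem_of_le C hkj hA₀.1, add_right_comm _ _ _⟩
  have hAdeg : A.degree = m := by
    have h := congrArg degree hB
    simp only [map_add, hgen A₀ hA₀, degree_single] at h
    omega
  refine ⟨A, j, minGen_of_mem_of_degree_eq hgen hA hAdeg, ?_, hB⟩
  rw [hjmax, hB]
  exact maxIndex_mono le_self_add

theorem BorelFixed.mem_image_stableDecomposition_iff (hI : BorelFixed I)
    {G : Finset (Fin (n + 1) →₀ ℕ)} (hG : ∀ A, A ∈ G ↔ MinGen I A)
    (hgen : ∀ A, MinGen I A → A.degree = m) (B : Fin (n + 1) →₀ ℕ) :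
    B ∈ (stableDecomposition G).image (fun p => p.1 + single p.2 1) ↔
      monomial B (1 : K) ∈ I ∧ B.degree = m + 1 := by
  simp only [stableDecomposition, Finset.mem_image, Finset.mem_sigma, Finset.mem_filter_univ,
    Sigma.exists, hG]
  constructor
  · rintro ⟨A, j, ⟨hA, -⟩, rfl⟩
    exact ⟨monomial_add_mem hA.1 _, by rw [map_add, hgen A hA, degree_single]⟩
  · rintro ⟨hB, hdeg⟩
    obtain ⟨A, j, hA, hj, rfl⟩ := hI.exists_minGen_add_single_maxIndex_le hgen hB hdeg
    exact ⟨A, j, ⟨hA, hj⟩, rfl⟩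

end Borel

/-- For a Borel-fixed ideal `I ⊆ K[x_0,…,x_n]` generated in degree `m` with
minimal generating set `G`, one has `dim I_{m+1} = ∑_{x^A ∈ G} (n + 1 − max(A))`,
where `max(A)` is the largest variable index occurring in `x^A`. -/
theorem borel_growth_formula {n : ℕ} {K : Type*} [Field K]
    (I : Ideal (MvPolynomial (Fin (n + 1)) K)) (hI : BorelFixed I) (m : ℕ)
    (G : Finset (Fin (n + 1) →₀ ℕ))
    (hG : ∀ A : Fin (n + 1) →₀ ℕ, A ∈ G ↔ MinGen I A)
    (hdeg : ∀ A ∈ G, (A.sum fun _ e => e) = m) :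
    hilb I (m + 1) = ∑ A ∈ G, (n + 1 - A.support.sup fun j => (j : ℕ)) := by
  have hgen : ∀ A, MinGen I A → A.degree = m := fun A hA => hdeg A ((hG A).2 hA)
  obtain ⟨S, hS⟩ := hI.1
  rw [hilb,
    finrank_inf_homogeneousSubmodule_eq_card hS (hI.mem_image_stableDecomposition_iff hG hgen),
    Finset.card_image_of_injOn (injOn_stableDecomposition G), card_stableDecomposition]
  rfl
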